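/- arXiv:1908.10113 — 4 statements merged into one kernel-verified Lean document; each statement's English description precedes it below -/
import Mathlib

section
/- Let F be a free group with free generators x_1, ..., x_n and let p < n. Suppose y_1, ..., y_p are elements of F such that y_i = u_i · x_i · v_i where u_i and v_i are words involving only the generators x_{p+1}, ..., x_n. Then the set {y_1, ..., y_p, x_{p+1}, ..., x_n} is a set of free generators of F. -/
/-!
Write `H` for the subgroup generated by the `x_j` with `p ≤ j`. The endomorphism `x_i ↦ y_i`
fixes `H` pointwise, and so does the endomorphism sending `x_i ↦ u_i⁻¹ x_i v_i⁻¹` for `i < p`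
and fixing the other generators. Hence the two are mutually inverse on the generators, so the
first one is an automorphism.
-/

namespace FreeGroup

variable {α : Type*}

lemma lift_apply_eq_self_of_mem_closure {S : Set α} {y : α → FreeGroup α}
    (hy : ∀ j ∈ S, y j = of j) {g : FreeGroup α} (hg : g ∈ Subgroup.closure (of '' S)) :
    lift y g = g :=
  MonoidHom.eqOn_closure (f := lift y) (g := MonoidHom.id _)
    (by rintro _ ⟨j, hj, rfl⟩; simp [hy j hj]) hg

theorem lift_bijective_of_forall_eq_mul_of_mul {S : Set α} {y : α → FreeGroup α}
    (hS : ∀ j ∈ S, y j = of j)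
    (hSc : ∀ j ∉ S, ∃ u v : FreeGroup α, u ∈ Subgroup.closure (of '' S) ∧
      v ∈ Subgroup.closure (of '' S) ∧ y j = u * of j * v) :
    Function.Bijective (lift y) := by
  classical
  choose u v hu hv hy using hSc
  let z : α → FreeGroup α := fun j =>
    if h : j ∈ S then of j else (u j h)⁻¹ * of j * (v j h)⁻¹
  have hz : ∀ j ∈ S, z j = of j := fun j hj => dif_pos hj
  have hzc : ∀ j (h : j ∉ S), z j = (u j h)⁻¹ * of j * (v j h)⁻¹ := fun j h => dif_neg h
  have hzy : ∀ j, lift z (y j) = of j := by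
    intro j
    by_cases h : j ∈ S
    · rw [hS j h, lift_apply_of, hz j h]
    · rw [hy j h, _root_.map_mul, _root_.map_mul, lift_apply_eq_self_of_mem_closure hz (hu j h),
        lift_apply_eq_self_of_mem_closure hz (hv j h), lift_apply_of, hzc j h]
      group
  have hyz : ∀ j, lift y (z j) = of j := by
    intro j
    by_cases h : j ∈ S
    · rw [hz j h, lift_apply_of, hS j h]
    · rw [hzc j h, _root_.map_mul, _root_.map_mul, _root_.map_inv, _root_.map_inv,
        lift_apply_eq_self_of_mem_closure hS (hu j h),
        lift_apply_eq_self_of_mem_closure hS (hv j h), lift_apply_of, hy j h]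
      group
  refine (MonoidHom.toMulEquiv (lift y) (lift z) ?_ ?_).bijective <;> ext j
  · simp [hzy]
  · simp [hyz]

end FreeGroup

theorem stmt0_general (n p : ℕ) (y : Fin n → FreeGroup (Fin n))
    (h1 : ∀ i : Fin n, (i : ℕ) < p →
      ∃ u v : FreeGroup (Fin n),
        u ∈ Subgroup.closure (FreeGroup.of '' {j : Fin n | p ≤ (j : ℕ)}) ∧
        v ∈ Subgroup.closure (FreeGroup.of '' {j : Fin n | p ≤ (j : ℕ)}) ∧
        y i = u * FreeGroup.of i * v)
    (h2 : ∀ i : Fin n, p ≤ (i : ℕ) → y i = FreeGroup.of i) :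
    Function.Bijective (FreeGroup.lift y) :=
  FreeGroup.lift_bijective_of_forall_eq_mul_of_mul h2 fun i hi => h1 i (Nat.lt_of_not_le hi)

/-- If `y i = u * x_i * v` for `i < p` with `u, v` in the subgroup generated by the
generators `x_j`, `p ≤ j`, and `y i = x_i` for `p ≤ i`, then the `y i` form a set of
free generators of the free group on `n` generators. -/
theorem stmt0 (n p : ℕ) (hp : p < n) (y : Fin n → FreeGroup (Fin n))
    (h1 : ∀ i : Fin n, (i : ℕ) < p →
      ∃ u v : FreeGroup (Fin n),
        u ∈ Subgroup.closure (FreeGroup.of '' {j : Fin n | p ≤ (j : ℕ)}) ∧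
        v ∈ Subgroup.closure (FreeGroup.of '' {j : Fin n | p ≤ (j : ℕ)}) ∧
        y i = u * FreeGroup.of i * v)
    (h2 : ∀ i : Fin n, p ≤ (i : ℕ) → y i = FreeGroup.of i) :
    Function.Bijective (FreeGroup.lift y) :=
  stmt0_general n p y h1 h2
end

section
/- Let F be a free group of rank n with basis x_1, ..., x_n, let p < n, and suppose y_1, ..., y_p ∈ F satisfy y_i = u_i · x_i · v_i with u_i, v_i in the subgroup generated by x_{p+1}, ..., x_n. Then y_1, ..., y_p can be extended to a generating set of F of cardinality n. -/
/-- If `y i = u * x_i * v` for `i < p` with `u, v` in the subgroup generated by the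
generators `x_j`, `p ≤ j`, then `y_1, …, y_p` can be extended to a generating set of
cardinality `n` of the free group on `n` generators. -/
theorem stmt1 (n p : ℕ) (hp : p < n) (y : Fin p → FreeGroup (Fin n))
    (h1 : ∀ i : Fin p,
      ∃ u v : FreeGroup (Fin n),
        u ∈ Subgroup.closure (FreeGroup.of '' {j : Fin n | p ≤ (j : ℕ)}) ∧
        v ∈ Subgroup.closure (FreeGroup.of '' {j : Fin n | p ≤ (j : ℕ)}) ∧
        y i = u * FreeGroup.of (Fin.castLE hp.le i) * v) :
    ∃ z : Fin n → FreeGroup (Fin n),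
      (∀ i : Fin p, z (Fin.castLE hp.le i) = y i) ∧
      Subgroup.closure (Set.range z) = ⊤ := by
  refine ⟨fun j => if h : (j : ℕ) < p then y ⟨j, h⟩ else FreeGroup.of j, ?_, ?_⟩
  · intro i
    simp [i.isLt]
  · set z : Fin n → FreeGroup (Fin n) :=
      fun j => if h : (j : ℕ) < p then y ⟨j, h⟩ else FreeGroup.of j with hz
    have hhigh : ∀ j : Fin n, p ≤ (j : ℕ) → FreeGroup.of j ∈ Subgroup.closure (Set.range z) := by
      intro j hj
      apply Subgroup.subset_closure
      exact ⟨j, by simp [hz, Nat.not_lt.mpr hj]⟩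
    have hsub : Subgroup.closure (FreeGroup.of '' {j : Fin n | p ≤ (j : ℕ)})
        ≤ Subgroup.closure (Set.range z) := by
      apply Subgroup.closure_le _ |>.mpr
      rintro _ ⟨j, hj, rfl⟩
      exact hhigh j hj
    rw [eq_top_iff, ← FreeGroup.closure_range_of (Fin n), Subgroup.closure_le]
    rintro _ ⟨j, rfl⟩
    by_cases h : (j : ℕ) < p
    · obtain ⟨u, v, hu, hv, hy⟩ := h1 ⟨j, h⟩
      have hyz : y ⟨j, h⟩ ∈ Subgroup.closure (Set.range z) := by
        apply Subgroup.subset_closure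
        exact ⟨j, by simp [hz, h]⟩
      have : FreeGroup.of j = u⁻¹ * y ⟨j, h⟩ * v⁻¹ := by
        have : Fin.castLE hp.le ⟨j, h⟩ = j := by ext; simp
        rw [hy, this]; group
      rw [SetLike.mem_coe, this]
      exact mul_mem (mul_mem (inv_mem (hsub hu)) hyz) (inv_mem (hsub hv))
    · exact hhigh j (Nat.not_lt.mp h)
end

section
/- Let G_1 and G_2 be free groups, let T be a free group on two generators a, b, and let i : T → G_1 and j : T → G_2 be homomorphisms such that {i(a), i(b)} extends to a basis of G_1 (i.e., i(a), i(b) are part of a free generating set of G_1). Then the pushout (amalgamated product) G_1 *_T G_2 along i and j is a free group. -/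
/-!
Choose the basis of `G₁` so that it is `{i(a), i(b)} ⊔ Y`. The relations `i(a) = j(a)` and
`i(b) = j(b)` then merely eliminate the generators `i(a)`, `i(b)` of `G₁` in favour of elements
of `G₂`, so the pushout is `F(Y) ∗ G₂`, a free product of free groups, hence free.
-/

open Monoid

open scoped Monoid.Coprod

namespace FreeGroup

def coprodEquivSum (α β : Type*) : FreeGroup α ∗ FreeGroup β ≃* FreeGroup (α ⊕ β) :=
  MonoidHom.toMulEquiv (Coprod.lift (map Sum.inl) (map Sum.inr))
    (lift (Sum.elim (Coprod.inl ∘ of) (Coprod.inr ∘ of)))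
    (by ext <;> simp)
    (by ext (a | b) <;> simp)

instance (α β : Type*) : IsFreeGroup (FreeGroup α ∗ FreeGroup β) :=
  .ofMulEquiv (coprodEquivSum α β).symm

end FreeGroup

namespace Monoid.Coprod

variable {κ G H : Type*} [Group G] [Group H]

/-- The quotient by this subgroup is the amalgamated product `G *_T H` along the maps
`FreeGroup κ → G`, `FreeGroup κ → H` sending the generators to `x` and `y`. -/
def amalgamatingSubgroup (x : κ → G) (y : κ → H) : Subgroup (G ∗ H) :=
  Subgroup.normalClosure (Set.range fun k => inl (x k) * (inr (y k))⁻¹)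

instance (x : κ → G) (y : κ → H) : (amalgamatingSubgroup x y).Normal :=
  Subgroup.normalClosure_normal

theorem mk_inl_eq_mk_inr (x : κ → G) (y : κ → H) (k : κ) :
    ((inl (x k) : G ∗ H) : (G ∗ H) ⧸ amalgamatingSubgroup x y) = (inr (y k) : G ∗ H) :=
  QuotientGroup.eq_iff_div_mem.mpr <| by
    rw [div_eq_mul_inv]
    exact Subgroup.subset_normalClosure ⟨k, rfl⟩

end Monoid.Coprod

namespace FreeGroupBasis

open Monoid.Coprod

variable {κ ι G H : Type*} [Group G] [Group H]

noncomputable def ofBijectiveLift (z : ι → G) (hz : Function.Bijective (FreeGroup.lift z)) :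
    FreeGroupBasis ι G :=
  ofRepr (MulEquiv.ofBijective _ hz).symm

@[simp]
theorem ofBijectiveLift_apply (z : ι → G) (hz : Function.Bijective (FreeGroup.lift z)) (k : ι) :
    ofBijectiveLift z hz k = z k :=
  FreeGroup.lift_apply_of

def quotientAmalgamatingSubgroupEquiv (b : FreeGroupBasis (κ ⊕ ι) G) (c : κ → H) :
    (G ∗ H) ⧸ amalgamatingSubgroup (b ∘ .inl) c ≃* FreeGroup ι ∗ H := by
  let collapse : G ∗ H →* FreeGroup ι ∗ H :=
    Coprod.lift (b.lift (Sum.elim (inr ∘ c) (inl ∘ FreeGroup.of))) inr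
  have hker : amalgamatingSubgroup (b ∘ .inl) c ≤ collapse.ker :=
    Subgroup.normalClosure_le_normal <| by
      rintro _ ⟨k, rfl⟩
      simp [collapse]
  refine MonoidHom.toMulEquiv (QuotientGroup.lift _ collapse hker)
    (Coprod.lift (FreeGroup.lift fun i => QuotientGroup.mk' _ (inl (b (.inr i))))
      ((QuotientGroup.mk' _).comp inr)) ?_ ?_
  · refine QuotientGroup.monoidHom_ext _ (hom_ext (b.ext_hom _ _ ?_) (MonoidHom.ext fun _ => rfl))
    rintro (k | i)
    · simpa [collapse] using (mk_inl_eq_mk_inr (b ∘ .inl) c k).symm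
    · simp [collapse]
  · refine hom_ext (FreeGroup.ext_hom _ _ fun i => ?_) (MonoidHom.ext fun _ => rfl)
    simp [collapse]

end FreeGroupBasis

/-- If `G₁` is free of rank `n₁ ≥ 2`, `G₂` is free of rank `n₂`, and `i(a), i(b)` are
part of a free generating set of `G₁`, then the pushout `G₁ *_T G₂` along
`i : T → G₁`, `j : T → G₂` (with `T` free on two generators) is a free group. -/
theorem stmt3 (n₁ n₂ : ℕ) (hn₁ : 2 ≤ n₁)
    (i : FreeGroup Bool →* FreeGroup (Fin n₁))
    (j : FreeGroup Bool →* FreeGroup (Fin n₂))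
    (hbasis : ∃ z : Fin n₁ → FreeGroup (Fin n₁),
      Function.Bijective (FreeGroup.lift z) ∧
      z ⟨0, by omega⟩ = i (FreeGroup.of true) ∧
      z ⟨1, by omega⟩ = i (FreeGroup.of false)) :
    IsFreeGroup
      (Coprod (FreeGroup (Fin n₁)) (FreeGroup (Fin n₂)) ⧸
        Subgroup.normalClosure
          {Coprod.inl (i (FreeGroup.of true)) * (Coprod.inr (j (FreeGroup.of true)))⁻¹,
           Coprod.inl (i (FreeGroup.of false)) * (Coprod.inr (j (FreeGroup.of false)))⁻¹}) := by
  obtain ⟨z, hz, hz0, hz1⟩ := hbasis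
  let b : FreeGroupBasis ({k : Fin n₁ // k.val < 2} ⊕ {k : Fin n₁ // ¬k.val < 2}) _ :=
    (FreeGroupBasis.ofBijectiveLift z hz).reindex (Equiv.sumCompl _).symm
  let c (k : {k : Fin n₁ // k.val < 2}) : FreeGroup (Fin n₂) := j (.of (k.val.val = 0))
  have hrel : {Coprod.inl (i (FreeGroup.of true)) * (Coprod.inr (j (FreeGroup.of true)))⁻¹,
      Coprod.inl (i (FreeGroup.of false)) * (Coprod.inr (j (FreeGroup.of false)))⁻¹} =
      Set.range fun k => Coprod.inl ((b ∘ .inl) k) * (Coprod.inr (c k))⁻¹ := by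
    ext x
    constructor
    · rintro (rfl | rfl)
      · exact ⟨⟨⟨0, by omega⟩, by simp⟩, by simp [b, c, hz0]⟩
      · exact ⟨⟨⟨1, by omega⟩, by simp⟩, by simp [b, c, hz1]⟩
    · rintro ⟨⟨⟨k, hk⟩, hk2⟩, rfl⟩
      interval_cases k
      · simp [b, c, hz0]
      · simp [b, c, hz1]
  rw [hrel]
  exact .ofMulEquiv (b.quotientAmalgamatingSubgroupEquiv c).symm
end

section
/- Let G be a finitely generated free group of rank n and suppose g ∈ G is such that the quotient G / ⟪g⟫ is a free group of rank n - 1. Then in the abelianization G^{ab} ≅ ℤ^n, the image of g is a primitive element (part of a ℤ-basis of ℤ^n). -/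
/-!
Abelianizing, `G^{ab} ≅ ℤⁿ` and `G^{ab} / ⟨[g]⟩ ≅ (G / ⟪g⟫)^{ab} ≅ ℤⁿ⁻¹`. The quotient is free, so
the projection onto it splits: lifting a basis of the quotient and adding `[g]` gives a basis of
`G^{ab}`. For this `[g]` must have trivial annihilator, i.e. be nonzero, and `[g] = 0` would make
`ℤⁿ ≅ ℤⁿ⁻¹`.
-/

open Submodule in
theorem Module.Basis.exists_fin_succ_of_quotient_span_singleton {R M : Type*} [Ring R]
    [AddCommGroup M] [Module R M] {m : ℕ} {x : M} (hx : ∀ c : R, c • x = 0 → c = 0)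
    (b : Basis (Fin m) R (M ⧸ R ∙ x)) : ∃ B : Basis (Fin (m + 1)) R M, B 0 = x := by
  have := Module.Free.of_basis b
  obtain ⟨s, hs⟩ := Module.projective_lifting_property (R ∙ x).mkQ LinearMap.id (mkQ_surjective _)
  have hs' (q : M ⧸ R ∙ x) : Submodule.Quotient.mk (s q) = q := LinearMap.congr_fun hs q
  have hmk : (Submodule.Quotient.mk x : M ⧸ R ∙ x) = 0 :=
    (Submodule.Quotient.mk_eq_zero _).mpr (mem_span_singleton_self x)
  let bs := b.map (LinearEquiv.ofLeftInverse (g := (R ∙ x).mkQ) hs')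
  refine ⟨mkFinCons x bs ?_ ?_, by rw [coe_mkFinCons, Fin.cons_zero]⟩
  · rintro c _ ⟨q, rfl⟩ h
    have hq : q = 0 := by simpa [hs', hmk] using congr_arg (R ∙ x).mkQ h
    exact hx c (by simpa [hq] using h)
  · intro z
    have hz : (Submodule.Quotient.mk (z - s (Submodule.Quotient.mk z)) : M ⧸ R ∙ x) = 0 := by
      rw [Quotient.mk_sub, hs', sub_self]
    obtain ⟨c, hc⟩ := mem_span_singleton.mp ((Submodule.Quotient.mk_eq_zero _).mp hz)
    exact ⟨-c, Submodule.Quotient.mk z, by rw [neg_smul, hc]; abel⟩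

theorem Module.Basis.exists_apply_zero_eq_of_quotient_span_singleton {R M : Type*} [CommRing R]
    [IsDomain R] [AddCommGroup M] [Module R M] {m : ℕ} {x : M} (b : Basis (Fin (m + 1)) R M)
    (bQ : Basis (Fin m) R (M ⧸ R ∙ x)) : ∃ B : Basis (Fin (m + 1)) R M, B 0 = x := by
  have hx : x ≠ 0 := by
    rintro rfl
    let e := (R ∙ (0 : M)).quotEquivOfEqBot (Submodule.span_zero_singleton R)
    simpa using Fintype.card_congr ((bQ.map e).indexEquiv b)
  exact exists_fin_succ_of_quotient_span_singleton
    (fun c hc => (b.smul_eq_zero.mp hc).resolve_right hx) bQ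

noncomputable def MulEquiv.abelianizationBasis {ι G : Type*} [Group G] (e : FreeGroup ι ≃* G) :
    Module.Basis ι ℤ (Additive (Abelianization G)) :=
  (FreeAbelianGroup.basis ι).map (MulEquiv.toAdditive e.abelianizationCongr).toIntLinearEquiv

namespace Abelianization

variable {G : Type*} [Group G]

noncomputable def quotientNormalClosureEquiv (g : G) :
    (Additive (Abelianization G) ⧸ ℤ ∙ Additive.ofMul (of g)) ≃ₗ[ℤ]
      Additive (Abelianization (G ⧸ Subgroup.normalClosure {g})) :=
  let N := Subgroup.normalClosure {g}
  let S := ℤ ∙ Additive.ofMul (of g)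
  have hgN : (g : G ⧸ N) = 1 :=
    (QuotientGroup.eq_one_iff g).mpr (Subgroup.subset_normalClosure rfl)
  let ψ : G →* Multiplicative (Additive (Abelianization G) ⧸ S) :=
    AddMonoidHom.toMultiplicativeRight (S.mkQ.toAddMonoidHom.comp (MonoidHom.toAdditive of))
  have hψ : N ≤ ψ.ker := Subgroup.normalClosure_le_normal <| Set.singleton_subset_iff.mpr <|
    congrArg Multiplicative.ofAdd <| (Submodule.Quotient.mk_eq_zero S).mpr
      (Submodule.mem_span_singleton_self _)
  LinearEquiv.ofLinearMap
    (S.liftQ (MonoidHom.toAdditive (map (QuotientGroup.mk' N))).toIntLinearMap <|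
      Submodule.span_le.mpr <| Set.singleton_subset_iff.mpr <|
        congrArg (Additive.ofMul ∘ of) hgN)
    (MonoidHom.toAdditiveLeft (lift (QuotientGroup.lift N ψ hψ))).toIntLinearMap
    (by ext ⟨⟨b⟩⟩; rfl)
    (by ext x; rcases x with ⟨b⟩; rfl)

end Abelianization

/-- If `G` is free of rank `n` and `G / ⟪g⟫` is free of rank `n - 1`, then the image
of `g` in the abelianization `G^{ab} ≅ ℤⁿ` is a primitive element, i.e. part of a
ℤ-basis of the abelianization. -/
theorem stmt7 (G : Type*) [Group G] (n : ℕ) (hn : 0 < n) (g : G)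
    (hfree : ∃ z : Fin n → G, Function.Bijective (FreeGroup.lift z))
    (hquot : Nonempty ((G ⧸ Subgroup.normalClosure {g}) ≃* FreeGroup (Fin (n - 1)))) :
    ∃ B : Module.Basis (Fin n) ℤ (Additive (Abelianization G)),
      B ⟨0, hn⟩ = Additive.ofMul (Abelianization.of g) := by
  obtain ⟨m, rfl⟩ := Nat.exists_eq_add_one_of_ne_zero hn.ne'
  obtain ⟨z, hz⟩ := hfree
  obtain ⟨e⟩ := hquot
  let bQ := e.symm.abelianizationBasis.map (Abelianization.quotientNormalClosureEquiv g).symm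
  exact (MulEquiv.ofBijective _ hz).abelianizationBasis
    |>.exists_apply_zero_eq_of_quotient_span_singleton
      (bQ.reindex (finCongr (Nat.add_sub_cancel m 1)))
end
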